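/- arXiv:1302.6659 — 2 statements merged into one kernel-verified Lean document; each statement's English description precedes it below -/
import Mathlib

section
/- Let y be an integer with 0 ≤ y ≤ n−1, let v ∈ [0,1), and let c ∈ (0,1). If θ_R, θ_CP ∈ (0,1) satisfy (1−v) F_{θ_R}(y−1) + v F_{θ_R}(y) = c and F_{θ_CP}(y) = c, then θ_R < θ_CP. (The upper endpoint of the randomized confidence interval is strictly smaller than the Clopper–Pearson upper endpoint.) -/
/-- The Binomial(n, θ) probability mass function `f_θ(y) = C(n,y) θ^y (1-θ)^(n-y)`. -/
noncomputable def binomP (n : ℕ) (θ : ℝ) (y : ℕ) : ℝ :=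
  (n.choose y : ℝ) * θ ^ y * (1 - θ) ^ (n - y)

/-- `F_θ(y-1) = ∑_{j=0}^{y-1} f_θ(j)`, with the convention `F_θ(-1) = 0`. -/
noncomputable def binomCDFpred (n : ℕ) (θ : ℝ) (y : ℕ) : ℝ :=
  ∑ j ∈ Finset.range y, binomP n θ j

/-- The Binomial(n, θ) cumulative distribution function `F_θ(y) = ∑_{j=0}^{y} f_θ(j)`. -/
noncomputable def binomCDF (n : ℕ) (θ : ℝ) (y : ℕ) : ℝ :=
  ∑ j ∈ Finset.range (y + 1), binomP n θ j

/-!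
`F_θ(y)` is the evaluation at `θ` of the sum of the Bernstein polynomials `b_{n,0}, …, b_{n,y}`,
whose derivative telescopes to `-n b_{n-1,y}`. For `y < n` this is negative on `(0,1)`, so
`θ ↦ F_θ(y)` is strictly decreasing on `[0,1]`. Since `F_θ(y) = F_θ(y-1) + f_θ(y)` and `v < 1`,
the randomized equation gives `F_{θ_R}(y) = c + (1-v) f_{θ_R}(y) > c = F_{θ_CP}(y)`,
hence `θ_R < θ_CP`.
-/

open Polynomial Finset

theorem bernsteinPolynomial.derivative_sum_range_succ (R : Type*) [CommRing R] (n y : ℕ) :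
    derivative (∑ j ∈ range (y + 1), bernsteinPolynomial R n j) =
      -(n * bernsteinPolynomial R (n - 1) y) := by
  induction y with
  | zero => simp [bernsteinPolynomial.derivative_zero]
  | succ y ih =>
    rw [sum_range_succ, derivative_add, ih, bernsteinPolynomial.derivative_succ]
    ring

theorem binomP_eq_eval_bernsteinPolynomial (n : ℕ) (θ : ℝ) (j : ℕ) :
    binomP n θ j = (bernsteinPolynomial ℝ n j).eval θ := by
  simp [binomP, bernsteinPolynomial]

theorem binomP_pos {n j : ℕ} (hj : j ≤ n) {θ : ℝ} (hθ : θ ∈ Set.Ioo 0 1) :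
    0 < binomP n θ j := by
  have h1θ : 0 < 1 - θ := sub_pos.mpr hθ.2
  have hchoose : (0 : ℝ) < n.choose j := by exact_mod_cast Nat.choose_pos hj
  exact mul_pos (mul_pos hchoose (pow_pos hθ.1 j)) (pow_pos h1θ _)

theorem binomCDF_eq_binomCDFpred_add (n : ℕ) (θ : ℝ) (y : ℕ) :
    binomCDF n θ y = binomCDFpred n θ y + binomP n θ y :=
  sum_range_succ _ _

theorem hasDerivAt_binomCDF (n y : ℕ) (θ : ℝ) :
    HasDerivAt (fun t => binomCDF n t y) (-(n * binomP (n - 1) θ y)) θ := by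
  have h := (∑ j ∈ range (y + 1), bernsteinPolynomial ℝ n j).hasDerivAt θ
  simp only [bernsteinPolynomial.derivative_sum_range_succ, eval_neg, eval_mul, eval_natCast,
    eval_finsetSum, ← binomP_eq_eval_bernsteinPolynomial] at h
  exact h

theorem binomCDF_strictAntiOn {n y : ℕ} (hy : y < n) :
    StrictAntiOn (fun θ => binomCDF n θ y) (Set.Icc 0 1) := by
  refine strictAntiOn_of_deriv_neg (convex_Icc 0 1)
    (fun θ _ => (hasDerivAt_binomCDF n y θ).continuousAt.continuousWithinAt) fun θ hθ => ?_
  rw [interior_Icc] at hθ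
  rw [(hasDerivAt_binomCDF n y θ).deriv, neg_lt_zero]
  have : (0 : ℝ) < n := by exact_mod_cast (y.zero_le.trans_lt hy)
  exact mul_pos this (binomP_pos (by omega) hθ)

theorem stmt_8_general (n : ℕ) (hn : 1 ≤ n) (y : ℕ) (hy : y ≤ n - 1)
    (v : ℝ) (hv : v ∈ Set.Ico (0 : ℝ) 1) (c : ℝ)
    (θR θCP : ℝ) (hθR : θR ∈ Set.Ioo (0 : ℝ) 1) (hθCP : θCP ∈ Set.Ioo (0 : ℝ) 1)
    (hR : (1 - v) * binomCDFpred n θR y + v * binomCDF n θR y = c)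
    (hCP : binomCDF n θCP y = c) :
    θR < θCP := by
  have hyn : y < n := by omega
  have hpos : 0 < (1 - v) * binomP n θR y :=
    mul_pos (sub_pos.mpr hv.2) (binomP_pos hyn.le hθR)
  have hlt : binomCDF n θCP y < binomCDF n θR y := by
    rw [hCP, ← hR, binomCDF_eq_binomCDFpred_add]
    linear_combination hpos
  exact (binomCDF_strictAntiOn hyn).lt_iff_gt (Set.Ioo_subset_Icc_self hθCP)
    (Set.Ioo_subset_Icc_self hθR) |>.mp hlt

/-- For `0 ≤ y ≤ n-1`, `v ∈ [0,1)`, `c ∈ (0,1)`: if `θ_R, θ_CP ∈ (0,1)` satisfy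
`(1-v) F_{θ_R}(y-1) + v F_{θ_R}(y) = c` and `F_{θ_CP}(y) = c`, then `θ_R < θ_CP`
(the randomized upper endpoint is strictly smaller than the Clopper–Pearson one). -/
theorem stmt_8 (n : ℕ) (hn : 1 ≤ n) (y : ℕ) (hy : y ≤ n - 1)
    (v : ℝ) (hv : v ∈ Set.Ico (0 : ℝ) 1) (c : ℝ) (hc : c ∈ Set.Ioo (0 : ℝ) 1)
    (θR θCP : ℝ) (hθR : θR ∈ Set.Ioo (0 : ℝ) 1) (hθCP : θCP ∈ Set.Ioo (0 : ℝ) 1)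
    (hR : (1 - v) * binomCDFpred n θR y + v * binomCDF n θR y = c)
    (hCP : binomCDF n θCP y = c) :
    θR < θCP :=
  stmt_8_general n hn y hy v hv c θR θCP hθR hθCP hR hCP
end

section
/- Let θ ∈ (0,1), and let M : {0,…,n} → ℕ with M(y) ≥ 1 for all y. Then for every t ∈ [0,1], Σ_{y=0}^{n} Σ_{k=1}^{M(y)} (f_θ(y)/M(y)) · 𝟙[(k/M(y))·f_θ(y) + F_θ(y−1) ≤ t] ≤ t. (If, conditional on Y = y, W is uniformly distributed on {1/M(y), 2/M(y), …, M(y)/M(y)}, then the discrete randomized upper-tail p-value W·f_θ(Y) + F_θ(Y−1) is stochastically larger than a Uniform(0,1) random variable.) -/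
open Finset

lemma sub_mul_ite_le_min_sub_min {a b : ℝ} (hab : a ≤ b) (t : ℝ) :
    (b - a) * (if b ≤ t then 1 else 0) ≤ min t b - min t a := by
  split_ifs with hbt
  · rw [min_eq_right hbt, min_eq_right (hab.trans hbt), mul_one]
  · rw [mul_zero, sub_nonneg]
    exact min_le_min_left t hab

lemma sum_Icc_div_mul_ite_le_min_sub_min (F f t : ℝ) (hf : 0 ≤ f) (M : ℕ) :
    ∑ k ∈ Icc 1 M, f / M * (if (k : ℝ) / M * f + F ≤ t then 1 else 0)
      ≤ min t (F + f) - min t F := by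
  rcases M.eq_zero_or_pos with rfl | hM
  · simpa using min_le_min_left t (le_add_of_nonneg_right hf)
  set g : ℕ → ℝ := fun k => (k : ℝ) / M * f + F with hg
  have hg_step : ∀ k, g (k + 1) - g k = f / M := fun k => by
    simp only [hg]; push_cast; ring
  have hg_mono : Monotone g := monotone_nat_of_le_succ fun k => by
    linarith [hg_step k, div_nonneg hf (Nat.cast_nonneg M)]
  calc ∑ k ∈ Icc 1 M, f / M * (if (k : ℝ) / M * f + F ≤ t then 1 else 0)
      = ∑ k ∈ range M, (g (k + 1) - g k) * (if g (k + 1) ≤ t then 1 else 0) := by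
        rw [← Ico_add_one_right_eq_Icc, sum_Ico_eq_sum_range, add_tsub_cancel_right]
        refine sum_congr rfl fun k _ => ?_
        rw [hg_step, add_comm 1 k]
    _ ≤ ∑ k ∈ range M, (min t (g (k + 1)) - min t (g k)) :=
        sum_le_sum fun k _ => sub_mul_ite_le_min_sub_min (hg_mono k.le_succ) t
    _ = min t (F + f) - min t F := by
        rw [sum_range_sub (fun k => min t (g k))]
        simp [hg, hM.ne', add_comm]

lemma binomP_nonneg (n : ℕ) {θ : ℝ} (hθ : θ ∈ Set.Icc (0 : ℝ) 1) (y : ℕ) :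
    0 ≤ binomP n θ y := by
  obtain ⟨hθ0, hθ1⟩ := hθ
  have : 0 ≤ 1 - θ := sub_nonneg.mpr hθ1
  unfold binomP
  positivity

lemma binomCDFpred_succ (n : ℕ) (θ : ℝ) (y : ℕ) :
    binomCDFpred n θ (y + 1) = binomCDFpred n θ y + binomP n θ y :=
  sum_range_succ _ y

theorem stmt_13_general (n : ℕ) (θ : ℝ) (hθ : θ ∈ Set.Ioo (0 : ℝ) 1)
    (M : ℕ → ℕ) (t : ℝ) (ht : t ∈ Set.Icc (0 : ℝ) 1) :
    ∑ y ∈ Finset.range (n + 1), ∑ k ∈ Finset.Icc 1 (M y),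
      binomP n θ y / (M y : ℝ) *
        (if (k : ℝ) / (M y : ℝ) * binomP n θ y + binomCDFpred n θ y ≤ t
          then (1 : ℝ) else 0) ≤ t := by
  calc _ ≤ ∑ y ∈ range (n + 1),
          (min t (binomCDFpred n θ (y + 1)) - min t (binomCDFpred n θ y)) :=
        sum_le_sum fun y _ => by
          rw [binomCDFpred_succ]
          exact sum_Icc_div_mul_ite_le_min_sub_min _ _ t
            (binomP_nonneg n (Set.Ioo_subset_Icc_self hθ) y) (M y)
    _ = min t (binomCDFpred n θ (n + 1)) := by
        rw [sum_range_sub (fun y => min t (binomCDFpred n θ y))]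
        simp [binomCDFpred, ht.1]
    _ ≤ t := min_le_left _ _

/-- For `θ ∈ (0,1)`, `M : {0,…,n} → ℕ` with `M(y) ≥ 1`, and every `t ∈ [0,1]`:
`∑_{y=0}^{n} ∑_{k=1}^{M(y)} (f_θ(y)/M(y)) 𝟙[(k/M(y)) f_θ(y) + F_θ(y-1) ≤ t] ≤ t`
(the discrete randomized upper-tail p-value `W f_θ(Y) + F_θ(Y-1)` is stochastically larger
than a `U(0,1)` random variable). -/
theorem stmt_13 (n : ℕ) (hn : 1 ≤ n) (θ : ℝ) (hθ : θ ∈ Set.Ioo (0 : ℝ) 1)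
    (M : ℕ → ℕ) (hM : ∀ y ≤ n, 1 ≤ M y) (t : ℝ) (ht : t ∈ Set.Icc (0 : ℝ) 1) :
    ∑ y ∈ Finset.range (n + 1), ∑ k ∈ Finset.Icc 1 (M y),
      binomP n θ y / (M y : ℝ) *
        (if (k : ℝ) / (M y : ℝ) * binomP n θ y + binomCDFpred n θ y ≤ t
          then (1 : ℝ) else 0) ≤ t :=
  stmt_13_general n θ hθ M t ht
end
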